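/- Let n ≥ 3 be odd and let G be the dihedral group of order 2n with cyclic subgroup H = ⟨α⟩ of index 2. If c₁, …, c_u ∈ G \ H are pairwise distinct (u ≥ 3) and the set of products {c_i c_j : i ≠ j} ⊂ H has exactly u − 1 elements, then u divides n and, after renumbering, there is r ∈ [0, n−1] such that c_k = α^{r + (k−1)n/u}τ for k = 1, …, u. -/
import Mathlib


/-- A multiset over a group is a product-one sequence if its terms can be
ordered so that their product equals the identity. -/
def IsProdOne {G : Type*} [Group G] (S : Multiset G) : Prop :=
  ∃ l : List G, (l : Multiset G) = S ∧ l.prod = 1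

/-- `S` has a product-one subsequence of length `k`. -/
def HasProdOneSub {G : Type*} [Group G] (S : Multiset G) (k : ℕ) : Prop :=
  ∃ T : Multiset G, T ≤ S ∧ Multiset.card T = k ∧ IsProdOne T

/-- `S` is product-one free: no nonempty subsequence is product-one. -/
def IsProdOneFree {G : Type*} [Group G] (S : Multiset G) : Prop :=
  ∀ T : Multiset G, T ≤ S → T ≠ 0 → ¬ IsProdOne T

open Pointwise

theorem stmt17 (n : ℕ) (hn : 3 ≤ n) (hodd : Odd n) (u : ℕ) (hu : 3 ≤ u)
    (c : Fin u → DihedralGroup n) (hinj : Function.Injective c)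
    (hc : ∀ k, ∃ i, c k = DihedralGroup.sr i)
    (hprod : Set.ncard {x : DihedralGroup n | ∃ i j, i ≠ j ∧ x = c i * c j}
      = u - 1) :
    u ∣ n ∧ ∃ σ : Equiv.Perm (Fin u), ∃ r : ℕ, r ≤ n - 1 ∧
      ∀ k : Fin u, c (σ k) =
        DihedralGroup.sr (((r + (k : ℕ) * (n / u) : ℕ) : ZMod n)) := by
  classical
  haveI : NeZero n := ⟨by omega⟩
  choose a ha using hc
  have hainj : Function.Injective a := by
    intro i j h
    apply hinj; rw [ha, ha, h]
  set A : Finset (ZMod n) := Finset.image a Finset.univ with hA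
  have hAcard : A.card = u := by
    rw [hA, Finset.card_image_of_injective _ hainj, Finset.card_univ, Fintype.card_fin]
  set Dfin : Finset (ZMod n) :=
    Finset.image (fun p : Fin u × Fin u => a p.1 - a p.2)
      (Finset.univ.filter (fun p => p.1 ≠ p.2)) with hDdef
  have hrinj : Function.Injective (DihedralGroup.r (n := n)) := fun x y h => by injection h
  have hSet : {x : DihedralGroup n | ∃ i j, i ≠ j ∧ x = c i * c j}
      = ↑(Finset.image DihedralGroup.r Dfin) := by
    ext x
    simp only [Set.mem_setOf_eq, Finset.coe_image, Set.mem_image, Finset.mem_coe, hDdef,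
      Finset.mem_image, Finset.mem_filter, Finset.mem_univ, true_and, Prod.exists]
    constructor
    · rintro ⟨i, j, hij, rfl⟩
      exact ⟨a j - a i, ⟨j, i, hij.symm, rfl⟩, by
        rw [ha, ha, DihedralGroup.sr_mul_sr]⟩
    · rintro ⟨d, ⟨i, j, hij, rfl⟩, rfl⟩
      exact ⟨j, i, hij.symm, by rw [ha, ha, DihedralGroup.sr_mul_sr]⟩
  have hDcard : Dfin.card = u - 1 := by
    rw [hSet, Set.ncard_coe_finset, Finset.card_image_of_injective _ hrinj] at hprod
    exact hprod
  set K : Finset (ZMod n) := A - A with hK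
  have hzero_notmem : (0 : ZMod n) ∉ Dfin := by
    simp only [hDdef, Finset.mem_image, Finset.mem_filter, Finset.mem_univ, true_and,
      Prod.exists, not_exists]
    intro i j h
    exact h.1 (hainj (sub_eq_zero.mp h.2))
  have hKeq : K = insert 0 Dfin := by
    ext x
    simp only [hK, Finset.mem_sub, Finset.mem_insert, hDdef, Finset.mem_image,
      Finset.mem_filter, Finset.mem_univ, true_and, Prod.exists, hA]
    constructor
    · rintro ⟨p, hp, q, hq, rfl⟩
      obtain ⟨i, rfl⟩ := hp; obtain ⟨j, rfl⟩ := hq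
      by_cases hij : i = j
      · subst hij; left; exact sub_self _
      · right; exact ⟨i, j, hij, rfl⟩
    · rintro (rfl | ⟨i, j, hij, rfl⟩)
      · exact ⟨a ⟨0, by omega⟩, ⟨_, rfl⟩, a ⟨0, by omega⟩, ⟨_, rfl⟩, sub_self _⟩
      · exact ⟨a i, ⟨i, rfl⟩, a j, ⟨j, rfl⟩, rfl⟩
  have hKcard : K.card = u := by
    rw [hKeq, Finset.card_insert_of_notMem hzero_notmem, hDcard]; omega
  have hKimg : ∀ i : Fin u, Finset.image (fun p => p - a i) A = K := by
    intro i
    apply Finset.eq_of_subset_of_card_le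
    · intro x hx
      simp only [Finset.mem_image] at hx
      obtain ⟨p, hp, rfl⟩ := hx
      exact Finset.sub_mem_sub hp (Finset.mem_image_of_mem a (Finset.mem_univ _))
    · rw [hKcard, Finset.card_image_of_injective _ (sub_left_injective), hAcard]
  have hsub : ∀ x ∈ K, ∀ y ∈ K, x - y ∈ K := by
    intro x hx y hy
    rw [← hKimg ⟨0, by omega⟩] at hx hy
    simp only [Finset.mem_image] at hx hy
    obtain ⟨p, hp, rfl⟩ := hx; obtain ⟨q, hq, rfl⟩ := hy
    have : p - a ⟨0, by omega⟩ - (q - a ⟨0, by omega⟩) = p - q := by ring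
    rw [this]
    exact Finset.sub_mem_sub hp hq
  have h0K : (0 : ZMod n) ∈ K := by rw [hKeq]; exact Finset.mem_insert_self _ _
  set H : AddSubgroup (ZMod n) :=
    { carrier := ↑K
      zero_mem' := h0K
      add_mem' := by
        intro x y hx hy
        have : x + y = x - (0 - y) := by ring
        rw [this]
        exact hsub x hx _ (hsub 0 h0K y hy)
      neg_mem' := by
        intro x hx
        have : -x = 0 - x := by ring
        rw [this]; exact hsub 0 h0K x hx } with hHdef
  have hHcard : Nat.card H = u := by
    have h1 : Nat.card H = (K : Set (ZMod n)).ncard := Nat.card_coe_set_eq _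
    rw [h1, Set.ncard_coe_finset, hKcard]
  have hudvd : u ∣ n := by
    have := AddSubgroup.card_addSubgroup_dvd_card H
    rwa [hHcard, Nat.card_eq_fintype_card, ZMod.card] at this
  refine ⟨hudvd, ?_⟩
  set m : ℕ := n / u with hm
  have hnum : n = u * m := (Nat.mul_div_cancel' hudvd).symm
  have hmpos : 0 < m := by
    rcases Nat.eq_zero_or_pos m with h | h
    · rw [h, mul_zero] at hnum; omega
    · exact h
  have hupos : 0 < u := by omega
  have husmul : ∀ x ∈ K, u • x = 0 := by
    intro x hx
    have h1 : (u : ℕ) • (⟨x, hx⟩ : H) = 0 := by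
      have := card_nsmul_eq_zero' (x := (⟨x, hx⟩ : H))
      rwa [hHcard] at this
    have h2 := congrArg (Subtype.val) h1
    simpa using h2
  set g : Fin u → ZMod n := fun k => ((k * m : ℕ) : ZMod n) with hg
  set L : Finset (ZMod n) := Finset.image g Finset.univ with hL
  have hKL : K ⊆ L := by
    intro x hx
    have h1 : ((u * x.val : ℕ) : ZMod n) = 0 := by
      push_cast
      rw [ZMod.natCast_zmod_val]
      have := husmul x hx
      rwa [nsmul_eq_mul] at this
    rw [ZMod.natCast_eq_zero_iff] at h1
    have hmx : m ∣ x.val := by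
      rcases h1 with ⟨t, ht⟩
      have h2 : u * x.val = u * (m * t) := by rw [ht, hnum]; ring
      exact ⟨t, Nat.eq_of_mul_eq_mul_left hupos h2⟩
    obtain ⟨q, hq⟩ := hmx
    have hqu : q < u := by
      have hxlt : x.val < n := ZMod.val_lt x
      nlinarith
    simp only [hL, Finset.mem_image, Finset.mem_univ, true_and]
    refine ⟨⟨q, hqu⟩, ?_⟩
    show ((q * m : ℕ) : ZMod n) = x
    rw [← ZMod.natCast_zmod_val x, hq]
    congr 1
    ring
  have hLcard : L.card ≤ u := le_trans (Finset.card_image_le) (by simp)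
  have hKLeq : K = L := Finset.eq_of_subset_of_card_le hKL (by omega)
  have hginj : Function.Injective g := by
    intro k1 k2 h
    have h1 : (k1 : ℕ) * m < n := by have := k1.2; nlinarith
    have h2 : (k2 : ℕ) * m < n := by have := k2.2; nlinarith
    have h3 : ((k1 : ℕ) * m) % n = ((k2 : ℕ) * m) % n :=
      (ZMod.natCast_eq_natCast_iff' _ _ _).mp h
    rw [Nat.mod_eq_of_lt h1, Nat.mod_eq_of_lt h2] at h3
    exact Fin.ext (Nat.eq_of_mul_eq_mul_right hmpos h3)
  set i0 : Fin u := ⟨0, by omega⟩ with hi0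
  have hmemA : ∀ k : Fin u, ∃ i : Fin u, a i = a i0 + g k := by
    intro k
    have hgk : g k ∈ K := by
      rw [hKLeq]; exact Finset.mem_image_of_mem g (Finset.mem_univ k)
    rw [← hKimg i0] at hgk
    simp only [Finset.mem_image, hA, Finset.mem_univ, true_and] at hgk
    obtain ⟨p, hp, hpk⟩ := hgk
    obtain ⟨i, rfl⟩ := hp
    exact ⟨i, by rw [← hpk]; ring⟩
  choose σ0 hσ0 using hmemA
  have hσinj : Function.Injective σ0 := by
    intro k1 k2 h
    apply hginj
    have h1 := hσ0 k1
    rw [h, hσ0 k2] at h1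
    exact (add_right_injective _ h1).symm
  refine ⟨Equiv.ofBijective σ0 (Finite.injective_iff_bijective.mp hσinj), (a i0).val,
    by have := ZMod.val_lt (a i0); omega, ?_⟩
  intro k
  show c (σ0 k) = _
  rw [ha, hσ0 k]
  congr 1
  simp only [hg]
  push_cast
  rw [ZMod.natCast_zmod_val]
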